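/- In Shamir's t-of-s secret sharing over Z_p (p prime, t ≤ s < p), for any secret a_0 and any set T of at most t-1 share indices, the distribution of the shares {f(j)}_{j∈T} (over the uniformly random choice of coefficients a_1,...,a_{t-1}) is independent of a_0: for every pair of secrets a_0, a_0' and every tuple of share values, the number of coefficient vectors producing those shares is the same. -/
import Mathlib

theorem shamir_aux (p t : ℕ) (hp : p.Prime)
    (T : Finset (ZMod p)) (hT0 : (0 : ZMod p) ∉ T) (hTcard : T.card ≤ t - 1)
    (Δ : ZMod p) :
    ∃ w : Fin (t - 1) → ZMod p,
      ∀ j ∈ T, ∑ k : Fin (t - 1), w k * j ^ ((k : ℕ) + 1) = Δ := by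
  haveI : Fact p.Prime := ⟨hp⟩
  set L : Polynomial (ZMod p) := Lagrange.interpolate T id (fun j => Δ / j) with hL
  refine ⟨fun k => L.coeff k, fun j hj => ?_⟩
  have hTne : T.Nonempty := ⟨j, hj⟩
  have hinj : Set.InjOn (id : ZMod p → ZMod p) T := Function.injective_id.injOn
  have hdeg : L.natDegree < t - 1 := by
    have hc : 0 < T.card := Finset.card_pos.mpr hTne
    rcases eq_or_ne L 0 with h0 | h0
    · rw [h0, Polynomial.natDegree_zero]
      omega
    · have hd := Lagrange.degree_interpolate_lt (r := fun j => Δ / j) hinj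
      rw [← hL] at hd
      have h2 := (Polynomial.natDegree_lt_iff_degree_lt h0).mpr hd
      omega
  have hcard : 0 < t - 1 := lt_of_lt_of_le (Finset.card_pos.mpr hTne) hTcard
  have heval : L.eval j = Δ / j := by
    have := Lagrange.eval_interpolate_at_node (r := fun j => Δ / j) hinj hj
    simpa [hL] using this
  have hj0 : j ≠ 0 := fun h => hT0 (h ▸ hj)
  have hsum : ∑ k : Fin (t - 1), L.coeff k * j ^ ((k : ℕ) + 1)
      = j * ∑ k : Fin (t - 1), L.coeff k * j ^ (k : ℕ) := by
    rw [Finset.mul_sum]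
    refine Finset.sum_congr rfl fun k _ => by ring
  rw [hsum]
  have : ∑ k : Fin (t - 1), L.coeff k * j ^ (k : ℕ) = L.eval j := by
    rw [Polynomial.eval_eq_sum_range' hdeg]
    exact Fin.sum_univ_eq_sum_range (fun i => L.coeff i * j ^ i) (t - 1)
  rw [this, heval, mul_div_cancel₀ _ hj0]

/-- In Shamir's `t`-of-`s` secret sharing over `ℤ_p`, for any set `T` of at
most `t-1` nonzero share indices and any tuple of share values, the number of coefficient
vectors `(a_1, …, a_{t-1})` producing those shares is independent of the secret `a_0`. -/
theorem shamir_shares_independent_of_secret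
    (p t s : ℕ) (hp : p.Prime) (ht : 1 ≤ t) (hts : t ≤ s) (hsp : s < p)
    (T : Finset (ZMod p)) (hT0 : (0 : ZMod p) ∉ T) (hTcard : T.card ≤ t - 1)
    (a₀ a₀' : ZMod p) (c : ZMod p → ZMod p) :
    Nat.card {v : Fin (t - 1) → ZMod p //
        ∀ j ∈ T, a₀ + ∑ k : Fin (t - 1), v k * j ^ ((k : ℕ) + 1) = c j}
      = Nat.card {v : Fin (t - 1) → ZMod p //
        ∀ j ∈ T, a₀' + ∑ k : Fin (t - 1), v k * j ^ ((k : ℕ) + 1) = c j} := by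
  obtain ⟨w, hw⟩ := shamir_aux p t hp T hT0 hTcard (a₀ - a₀')
  refine Nat.card_eq_of_bijective (fun v => ⟨v.1 + w, fun j hj => ?_⟩) ?_
  · have := v.2 j hj
    have hwj := hw j hj
    have : ∑ k : Fin (t - 1), (v.1 k + w k) * j ^ ((k : ℕ) + 1)
        = (∑ k : Fin (t - 1), v.1 k * j ^ ((k : ℕ) + 1)) + (a₀ - a₀') := by
      rw [← hwj, ← Finset.sum_add_distrib]
      exact Finset.sum_congr rfl fun k _ => by ring
    simp only [Pi.add_apply]
    rw [this]
    have h2 := v.2 j hj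
    linear_combination h2
  · constructor
    · intro x y hxy
      apply Subtype.ext
      have := congrArg Subtype.val hxy
      simpa using this
    · intro y
      refine ⟨⟨y.1 - w, fun j hj => ?_⟩, by apply Subtype.ext; simp⟩
      have hwj := hw j hj
      have h2 := y.2 j hj
      have : ∑ k : Fin (t - 1), (y.1 k - w k) * j ^ ((k : ℕ) + 1)
          = (∑ k : Fin (t - 1), y.1 k * j ^ ((k : ℕ) + 1)) - (a₀ - a₀') := by
        rw [← hwj, ← Finset.sum_sub_distrib]
        exact Finset.sum_congr rfl fun k _ => by ring
      simp only [Pi.sub_apply]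
      rw [this]
      linear_combination h2
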